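/- Let n ≥ 3 and let j be an integer with 3 ≤ j ≤ n. Then 2^(n+1-j) divides the binomial coefficient C(2^(n-1), j). -/

import Mathlib

/-! The absorption identity `C(m, j) * j = m * C(m - 1, j - 1)` shows that `C(m, j) * j` is divisible
by `m = 2^(n-1)`, so `C(m, j)` loses at most `v₂(j)` factors of two; and `v₂(j) ≤ j - 2` once `j ≥ 3`. -/

namespace Nat

theorem dvd_choose_mul {m j : ℕ} (hj : j ≠ 0) : m ∣ m.choose j * j := by
  obtain ⟨i, rfl⟩ := exists_eq_add_one_of_ne_zero hj
  rcases m with _ | m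
  · simp
  · exact ⟨m.choose i, (add_one_mul_choose_eq m i).symm⟩

theorem pow_sub_factorization_dvd_choose {p m j k : ℕ} (hp : p.Prime) (hj : j ≠ 0)
    (hm : p ^ k ∣ m) : p ^ (k - j.factorization p) ∣ m.choose j := by
  rcases eq_or_ne (m.choose j) 0 with hC | hC
  · rw [hC]
    exact dvd_zero _
  have hk : k ≤ (m.choose j * j).factorization p :=
    (hp.pow_dvd_iff_le_factorization (mul_ne_zero hC hj)).mp (hm.trans (dvd_choose_mul hj))
  rw [factorization_mul hC hj, Finsupp.add_apply] at hk
  exact (hp.pow_dvd_iff_le_factorization hC).mpr (by omega)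

theorem factorization_two_add_two_le {j : ℕ} (hj : 3 ≤ j) : j.factorization 2 + 2 ≤ j := by
  set v := j.factorization 2
  have hv : 2 ^ v ≤ j := le_of_dvd (by omega) (ordProj_dvd j 2)
  rcases lt_or_ge v 2 with hv2 | hv2
  · omega
  · have h : v - 1 < 2 ^ (v - 1) := (v - 1).lt_two_pow_self
    have h2 : 2 ^ v = 2 * 2 ^ (v - 1) := by rw [← pow_succ']; congr 1; omega
    omega

end Nat

theorem stmt_8_general (n j : ℕ) (hj1 : 3 ≤ j) :
    2 ^ (n + 1 - j) ∣ (2 ^ (n - 1)).choose j := by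
  have hdvd : 2 ^ (n - 1 - j.factorization 2) ∣ (2 ^ (n - 1)).choose j :=
    Nat.pow_sub_factorization_dvd_choose Nat.prime_two (by omega) dvd_rfl
  have hv := Nat.factorization_two_add_two_le hj1
  exact (Nat.pow_dvd_pow 2 (by omega)).trans hdvd

theorem stmt_8 (n j : ℕ) (hn : 3 ≤ n) (hj1 : 3 ≤ j) (hj2 : j ≤ n) :
    2 ^ (n + 1 - j) ∣ (2 ^ (n - 1)).choose j :=
  stmt_8_general n j hj1
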